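/- For every nonnegative integer n and integer p ≥ 0, h_n^{(p)} = (1/n!) * sum over k from 0 to n of s(n,k) * (-1)^{n-k} * k * p^{k-1}, where s(n,k) are (signed) Stirling numbers of the first kind. -/
import Mathlib


/-- Unsigned Stirling numbers of the first kind. -/
def S1u : ℕ → ℕ → ℕ
  | 0, 0 => 1
  | 0, _ + 1 => 0
  | _ + 1, 0 => 0
  | n + 1, k + 1 => n * S1u n (k + 1) + S1u n k

/-- Hyperharmonic numbers `h_n^{(p)}`: `h_n^{(1)} = H_n`,
`h_n^{(p+1)} = ∑_{j=1}^n h_j^{(p)}`, `h_0^{(p)} = 0`. -/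
def hyperharmonic : ℕ → ℕ → ℚ
  | 0, n => if n = 0 then 0 else (n : ℚ)⁻¹
  | p + 1, n => ∑ j ∈ Finset.Icc 1 n, hyperharmonic p j

open Polynomial

lemma coeff_asc (n k : ℕ) : (ascPochhammer ℚ n).coeff k = S1u n k := by
  induction n generalizing k with
  | zero =>
    cases k with
    | zero => simp [S1u]
    | succ k => simp [S1u, coeff_one, Nat.succ_ne_zero]
  | succ n ih =>
    rw [ascPochhammer_succ_right, mul_add, coeff_add, coeff_mul_natCast]
    cases k with
    | zero =>
      rw [coeff_mul_X_zero, ih]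
      cases n with
      | zero => simp [S1u]
      | succ m => simp [S1u]
    | succ k =>
      rw [coeff_mul_X, ih, ih]
      show (S1u n k : ℚ) + S1u n (k+1) * n = S1u (n+1) (k+1)
      show (S1u n k : ℚ) + S1u n (k+1) * n = ((n * S1u n (k + 1) + S1u n k : ℕ) : ℚ)
      push_cast
      ring

lemma shift_identity (n : ℕ) :
    (ascPochhammer ℚ (n+1)).comp (X + 1) =
      ascPochhammer ℚ (n+1) + ((n:ℚ[X]) + 1) * (ascPochhammer ℚ n).comp (X + 1) := by
  have h1 : (ascPochhammer ℚ (n+1)).comp (X + 1) =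
      (ascPochhammer ℚ n).comp (X + 1) * (X + 1 + (n : ℚ[X])) := by
    rw [ascPochhammer_succ_right, mul_comp, add_comp, X_comp, natCast_comp]
  rw [h1, ascPochhammer_succ_left]
  ring

lemma asc_deriv_shift (n : ℕ) (x : ℚ) :
    (derivative (ascPochhammer ℚ (n+1))).eval (x + 1) =
      (derivative (ascPochhammer ℚ (n+1))).eval x +
        ((n : ℚ) + 1) * (derivative (ascPochhammer ℚ n)).eval (x + 1) := by
  have h' := congrArg (fun q => eval x (derivative q)) (shift_identity n)
  simp only [derivative_comp, derivative_add, derivative_mul, derivative_X, derivative_one,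
    derivative_natCast, add_zero, zero_add, one_mul, zero_mul, eval_add, eval_mul,
    eval_comp, eval_X, eval_one, eval_natCast] at h'
  linarith [h']

lemma eval_zero_deriv (n : ℕ) :
    (derivative (ascPochhammer ℚ (n+1))).eval 0 = (n.factorial : ℚ) := by
  rw [ascPochhammer_succ_left, derivative_mul, derivative_X]
  simp [eval_comp, ascPochhammer_eval_one]

lemma key (p n : ℕ) :
    hyperharmonic p n = (derivative (ascPochhammer ℚ n)).eval (p : ℚ) / n.factorial := by
  induction p generalizing n with
  | zero =>
    cases n with
    | zero => simp [hyperharmonic]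
    | succ m =>
      rw [hyperharmonic]
      simp only [Nat.succ_ne_zero, if_false, Nat.cast_zero, eval_zero_deriv]
      rw [Nat.factorial_succ]
      push_cast
      rw [eq_div_iff (by positivity)]
      field_simp
  | succ p ihp =>
    induction n with
    | zero => simp [hyperharmonic, derivative_one]
    | succ m ihm =>
      have hrec : hyperharmonic (p+1) (m+1) = hyperharmonic (p+1) m + hyperharmonic p (m+1) := by
        show (∑ j ∈ Finset.Icc 1 (m+1), hyperharmonic p j) = _
        rw [Finset.sum_Icc_succ_top (by omega)]
        rfl
      rw [hrec, ihm, ihp (m+1)]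
      have hshift := asc_deriv_shift m (p : ℚ)
      have hp1 : ((p : ℚ) + 1) = ((p + 1 : ℕ) : ℚ) := by push_cast; ring
      rw [hp1] at hshift
      rw [hshift]
      have hfm : (m.factorial : ℚ) ≠ 0 := by positivity
      have hfm1 : ((m+1).factorial : ℚ) ≠ 0 := by positivity
      rw [Nat.factorial_succ]
      push_cast
      field_simp
      ring

theorem hyperharmonic_eq_stirling1_sum (n p : ℕ) :
    hyperharmonic p n =
      (1 / (Nat.factorial n : ℚ)) *
        ∑ k ∈ Finset.range (n + 1),
          ((-1 : ℚ) ^ (n - k) * S1u n k) * (-1) ^ (n - k) * k * (p : ℚ) ^ (k - 1) := by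
  rw [key p n]
  have hsimp : ∀ k ∈ Finset.range (n+1),
      ((-1 : ℚ) ^ (n - k) * S1u n k) * (-1) ^ (n - k) * k * (p : ℚ) ^ (k - 1)
        = (S1u n k : ℚ) * k * (p : ℚ) ^ (k - 1) := by
    intro k _
    have : ((-1 : ℚ) ^ (n - k)) * ((-1 : ℚ) ^ (n - k)) = 1 := by
      rw [← pow_add, Even.neg_one_pow ⟨n - k, rfl⟩]
    calc ((-1 : ℚ) ^ (n - k) * S1u n k) * (-1) ^ (n - k) * k * (p : ℚ) ^ (k - 1)
        = ((-1 : ℚ) ^ (n - k) * (-1) ^ (n - k)) * ((S1u n k : ℚ) * k * (p : ℚ) ^ (k - 1)) := by ring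
      _ = (S1u n k : ℚ) * k * (p : ℚ) ^ (k - 1) := by rw [this, one_mul]
  rw [Finset.sum_congr rfl hsimp]
  have hdeg : (derivative (ascPochhammer ℚ n)).natDegree < n + 1 := by
    calc (derivative (ascPochhammer ℚ n)).natDegree ≤ (ascPochhammer ℚ n).natDegree - 1 :=
          natDegree_derivative_le _
      _ ≤ n := by rw [ascPochhammer_natDegree]; omega
      _ < n + 1 := Nat.lt_succ_self _
  rw [eval_eq_sum_range' hdeg]
  have hsum : (∑ k ∈ Finset.range (n + 1), (S1u n k : ℚ) * k * (p : ℚ) ^ (k - 1))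
      = ∑ i ∈ Finset.range (n + 1), (derivative (ascPochhammer ℚ n)).coeff i * (p : ℚ) ^ i := by
    rw [Finset.sum_range_succ' (fun k => (S1u n k : ℚ) * k * (p : ℚ) ^ (k - 1))]
    simp only [Nat.cast_zero, mul_zero, zero_mul, add_zero]
    rw [Finset.sum_range_succ (fun i => (derivative (ascPochhammer ℚ n)).coeff i * (p : ℚ) ^ i)]
    have htop : (derivative (ascPochhammer ℚ n)).coeff n * (p : ℚ) ^ n = 0 := by
      rw [coeff_derivative,
        coeff_eq_zero_of_natDegree_lt (by rw [ascPochhammer_natDegree]; omega)]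
      ring
    rw [htop, add_zero]
    refine Finset.sum_congr rfl fun i _ => ?_
    rw [coeff_derivative, coeff_asc]
    push_cast
    ring
  rw [hsum, div_eq_mul_inv, one_div, mul_comm]
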